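/- Let ε ∈ (0,1], k ≥ 1, 0 < s₁ < … < s_k, and x ∈ ℝ^k. Then ε^{-k} P[∏_{i=1}^k 1{|x_i − B_{s_i}| ≤ ε/2}] ≤ ∏_{i=1}^k ρ(s_i − s_{i−1}, x_i − x_{i−1}) · e^{|x_i − x_{i−1}|/(s_i − s_{i−1})}, where B is a standard Brownian motion started at 0 and s₀ = x₀ = 0. -/

import Mathlib

open MeasureTheory

/- On the event in question each increment `yᵢ − y_{i−1}` of the path lies within `ε ≤ 1` of
`xᵢ − x_{i−1}`, and `ρ(a, v) ≤ ρ(a, u) e^{|u|/a}` whenever `|v − u| ≤ 1`, since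
`u² − v² ≤ 2|u|` there. So the integrand is bounded by the product of the right-hand side with
the indicator of a box of side `ε` around `x`, whose volume is `εᵏ`. -/

noncomputable def heatKernel (s x : ℝ) : ℝ :=
  Real.exp (-x ^ 2 / (2 * s)) / Real.sqrt (2 * Real.pi * s)

/-- Previous coordinate, with the convention `s₀ = 0` (resp. `x₀ = 0`). -/
def prevCoord {k : ℕ} (s : Fin k → ℝ) (j : Fin k) : ℝ :=
  if h : (j : ℕ) = 0 then 0 else s ⟨(j : ℕ) - 1, by omega⟩

lemma heatKernel_nonneg (s x : ℝ) : 0 ≤ heatKernel s x := by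
  unfold heatKernel
  positivity

lemma sq_sub_sq_le_two_mul_abs_of_abs_sub_le_one {u v : ℝ} (h : |v - u| ≤ 1) :
    u ^ 2 - v ^ 2 ≤ 2 * |u| := by
  have hdiff : |u * (v - u)| ≤ |u| := by
    rw [abs_mul]
    exact mul_le_of_le_one_right (abs_nonneg u) h
  nlinarith [sq_nonneg (v - u), neg_abs_le (u * (v - u))]

lemma heatKernel_le_mul_exp {a u v : ℝ} (ha : 0 < a) (h : |v - u| ≤ 1) :
    heatKernel a v ≤ heatKernel a u * Real.exp (|u| / a) := by
  unfold heatKernel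
  rw [div_mul_eq_mul_div, ← Real.exp_add]
  gcongr
  rw [show |u| / a = 2 * |u| / (2 * a) by field_simp, ← add_div]
  gcongr
  linarith [sq_sub_sq_le_two_mul_abs_of_abs_sub_le_one h]

section prevCoord

variable {k : ℕ}

lemma sub_prevCoord_pos {s : Fin k → ℝ} (hs : ∀ i, 0 < s i) (hmono : StrictMono s) (i : Fin k) :
    0 < s i - prevCoord s i := by
  unfold prevCoord
  split_ifs with hi
  · simpa using hs i
  · exact sub_pos.2 (hmono (Fin.lt_def.2 (by simp only; omega)))

lemma prevCoord_sub (y x : Fin k → ℝ) (i : Fin k) :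
    prevCoord (y - x) i = prevCoord y i - prevCoord x i := by
  unfold prevCoord
  split_ifs <;> simp

lemma abs_prevCoord_le {z : Fin k → ℝ} {r : ℝ} (hr : 0 ≤ r) (h : ∀ j, |z j| ≤ r) (i : Fin k) :
    |prevCoord z i| ≤ r := by
  unfold prevCoord
  split_ifs
  · simpa using hr
  · exact h _

lemma abs_increment_sub_le {x y : Fin k → ℝ} {r : ℝ} (h : ∀ j, |y j - x j| ≤ r) (i : Fin k) :
    |(y i - prevCoord y i) - (x i - prevCoord x i)| ≤ 2 * r := by
  have hr : 0 ≤ r := (abs_nonneg _).trans (h i)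
  have hyx : ∀ j, |(y - x) j| ≤ r := h
  calc |(y i - prevCoord y i) - (x i - prevCoord x i)|
      = |(y - x) i - prevCoord (y - x) i| := by rw [prevCoord_sub, Pi.sub_apply]; ring_nf
    _ ≤ |(y - x) i| + |prevCoord (y - x) i| := abs_sub _ _
    _ ≤ 2 * r := by linarith [hyx i, abs_prevCoord_le hr hyx i]

end prevCoord

section Box

variable {ι : Type*} [Fintype ι]

lemma prod_ite_mul_le_prod_ite_mul {p : ι → Prop} [DecidablePred p] {g c : ι → ℝ}
    (hg : ∀ i, 0 ≤ g i) (h : (∀ i, p i) → ∀ i, g i ≤ c i) :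
    ∏ i, (if p i then 1 else 0) * g i ≤ ∏ i, (if p i then 1 else 0) * c i := by
  by_cases hp : ∀ i, p i
  · simp only [hp, if_true, one_mul]
    exact Finset.prod_le_prod (fun i _ => hg i) fun i _ => h hp i
  · obtain ⟨i, hi⟩ := not_forall.1 hp
    rw [Finset.prod_eq_zero (Finset.mem_univ i) (by simp [hi]),
      Finset.prod_eq_zero (Finset.mem_univ i) (by simp [hi])]

lemma ite_abs_sub_le_mul_eq_indicator (x r c t : ℝ) :
    (if |x - t| ≤ r then 1 else 0) * c = (Metric.closedBall x r).indicator (fun _ => c) t := by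
  simp only [Set.indicator, Metric.mem_closedBall, Real.dist_eq, abs_sub_comm t x]
  split_ifs <;> simp

lemma integral_prod_ite_abs_sub_le_mul (x c : ι → ℝ) {r : ℝ} (hr : 0 ≤ r) :
    ∫ y : ι → ℝ, ∏ i, (if |x i - y i| ≤ r then 1 else 0) * c i = ∏ i, 2 * r * c i := by
  simp_rw [ite_abs_sub_le_mul_eq_indicator]
  rw [integral_fintype_prod_volume_eq_prod
    (fun i => (Metric.closedBall (x i) r).indicator fun _ => c i)]
  congr 1 with i
  rw [integral_indicator_const _ Metric.isClosed_closedBall.measurableSet,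
    Real.volume_real_closedBall hr, smul_eq_mul, mul_assoc]

lemma integrable_prod_ite_abs_sub_le_mul (x c : ι → ℝ) (r : ℝ) :
    Integrable fun y : ι → ℝ => ∏ i, (if |x i - y i| ≤ r then 1 else 0) * c i := by
  simp_rw [ite_abs_sub_le_mul_eq_indicator]
  exact Integrable.fintype_prod fun i =>
    (integrableOn_const measure_closedBall_lt_top.ne).integrable_indicator
      Metric.isClosed_closedBall.measurableSet

end Box

theorem small_tube_prob_le_general (k : ℕ) (ε : ℝ) (hε : ε ∈ Set.Ioc (0 : ℝ) 1)
    (s x : Fin k → ℝ) (hs : ∀ i, 0 < s i) (hmono : StrictMono s) :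
    (ε ^ k)⁻¹ *
      ∫ y : Fin k → ℝ, ∏ i : Fin k,
        (if |x i - y i| ≤ ε / 2 then (1 : ℝ) else 0) *
          heatKernel (s i - prevCoord s i) (y i - prevCoord y i)
      ≤ ∏ i : Fin k,
          heatKernel (s i - prevCoord s i) (x i - prevCoord x i) *
            Real.exp (|x i - prevCoord x i| / (s i - prevCoord s i)) := by
  obtain ⟨hε0, hε1⟩ := hε
  set c : Fin k → ℝ := fun i =>
    heatKernel (s i - prevCoord s i) (x i - prevCoord x i) *
      Real.exp (|x i - prevCoord x i| / (s i - prevCoord s i))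
  have hbound : ∀ y : Fin k → ℝ,
      ∏ i, (if |x i - y i| ≤ ε / 2 then (1 : ℝ) else 0) *
          heatKernel (s i - prevCoord s i) (y i - prevCoord y i)
        ≤ ∏ i, (if |x i - y i| ≤ ε / 2 then (1 : ℝ) else 0) * c i := fun y =>
    prod_ite_mul_le_prod_ite_mul (fun _ => heatKernel_nonneg _ _) fun hy i =>
      heatKernel_le_mul_exp (sub_prevCoord_pos hs hmono i)
        ((abs_increment_sub_le (fun j => (abs_sub_comm _ _).trans_le (hy j)) i).trans (by linarith))
  have hint := integral_mono_of_nonneg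
    (Filter.Eventually.of_forall fun y => Finset.prod_nonneg fun i _ =>
      mul_nonneg (by split_ifs <;> norm_num) (heatKernel_nonneg _ _))
    (integrable_prod_ite_abs_sub_le_mul x c (ε / 2)) (Filter.Eventually.of_forall hbound)
  rw [integral_prod_ite_abs_sub_le_mul x c (by positivity)] at hint
  calc _ ≤ (ε ^ k)⁻¹ * ∏ i, 2 * (ε / 2) * c i := by gcongr
    _ = ∏ i, c i := by
      rw [Finset.prod_mul_distrib, Finset.prod_const, Finset.card_univ, Fintype.card_fin,
        show 2 * (ε / 2) = ε by ring, inv_mul_cancel_left₀ (pow_ne_zero k hε0.ne')]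

/-- For `ε ∈ (0,1]`, `k ≥ 1`, `0 < s₁ < … < s_k` and `x ∈ ℝ^k`,
`ε^{-k} P[∏ᵢ 1{|xᵢ − B_{sᵢ}| ≤ ε/2}]
  ≤ ∏ᵢ ρ(sᵢ−s_{i−1}, xᵢ−x_{i−1}) e^{|xᵢ−x_{i−1}|/(sᵢ−s_{i−1})}`.
The Wiener expectation is expressed, via the Markov property, as the integral of the
indicator against the product of Gaussian transition densities. -/
theorem small_tube_prob_le (k : ℕ) (hk : 1 ≤ k) (ε : ℝ) (hε : ε ∈ Set.Ioc (0 : ℝ) 1)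
    (s x : Fin k → ℝ) (hs : ∀ i, 0 < s i) (hmono : StrictMono s) :
    (ε ^ k)⁻¹ *
      ∫ y : Fin k → ℝ, ∏ i : Fin k,
        (if |x i - y i| ≤ ε / 2 then (1 : ℝ) else 0) *
          heatKernel (s i - prevCoord s i) (y i - prevCoord y i)
      ≤ ∏ i : Fin k,
          heatKernel (s i - prevCoord s i) (x i - prevCoord x i) *
            Real.exp (|x i - prevCoord x i| / (s i - prevCoord s i)) :=
  small_tube_prob_le_general k ε hε s x hs hmono
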